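/- Let (Φ_t)_{t≥0} be a family of measure-preserving bijections of 𝕋^d and let ℱ denote the set of all ρ ∈ L^∞(𝕋^d) (equivalence classes modulo μ-null sets) whose trajectory {ρ∘Φ_t^{-1}}_{t≥0} is not precompact in L²(𝕋^d). Then ℱ is open and dense in the Banach space L^∞(𝕋^d) if and only if there exists a measurable set D ⊆ 𝕋^d for which the family {1_D∘Φ_t^{-1}}_{t≥0} is not precompact in L²(𝕋^d). -/

import Mathlib

open MeasureTheory Filter Topology
open scoped ENNReal

/-- The `d`-dimensional torus `ℝ^d/ℤ^d`, with its quotient metric and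
Haar–Lebesgue probability measure. -/
abbrev Torus (d : ℕ) := Fin d → AddCircle (1 : ℝ)

/-- The trajectory `{ρ ∘ Φ_t⁻¹ : t ≥ 0}` of a function `ρ`, regarded as the set of
elements of `L²(𝕋^d)` whose representative agrees a.e. with `ρ ∘ (Φ t).symm`
for some `t ≥ 0`. -/
def trajectory {d : ℕ} (Φ : ℝ → (Torus d ≃ᵐ Torus d)) (ρ : Torus d → ℝ) :
    Set (Lp ℝ 2 (volume : Measure (Torus d))) :=
  {g | ∃ t : ℝ, 0 ≤ t ∧ (g : Torus d → ℝ) =ᵐ[volume] ρ ∘ (Φ t).symm}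

/-- The set `ℱ` of mixed data: elements of the Banach space `L^∞(𝕋^d)` whose
trajectory `{ρ ∘ Φ_t⁻¹}_{t ≥ 0}` is not precompact in `L²(𝕋^d)`. -/
def mixedData {d : ℕ} (Φ : ℝ → (Torus d ≃ᵐ Torus d)) :
    Set (Lp ℝ ⊤ (volume : Measure (Torus d))) :=
  {ρ | ¬ IsCompact (closure (trajectory Φ (ρ : Torus d → ℝ)))}

/-! ### Auxiliary instances and general lemmas -/

instance : IsProbabilityMeasure (volume : Measure (AddCircle (1:ℝ))) :=
  ⟨by simp [AddCircle.measure_univ]⟩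

instance (d : ℕ) : IsProbabilityMeasure (volume : Measure (Torus d)) := inferInstance

/-- A set that is uniformly approximated by totally bounded sets is totally bounded. -/
theorem totallyBounded_of_near {α : Type*} [PseudoMetricSpace α] {S : Set α}
    (h : ∀ ε : ℝ, 0 < ε → ∃ T : Set α, TotallyBounded T ∧ ∀ x ∈ S, ∃ y ∈ T, dist x y ≤ ε) :
    TotallyBounded S := by
  rw [Metric.totallyBounded_iff]
  intro ε hε
  obtain ⟨T, hT, hST⟩ := h (ε/3) (by linarith)
  rw [Metric.totallyBounded_iff] at hT
  obtain ⟨t, ht, hcover⟩ := hT (ε/3) (by linarith)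
  refine ⟨t, ht, fun x hx => ?_⟩
  obtain ⟨y, hy, hxy⟩ := hST x hx
  obtain ⟨c, hc, hyc⟩ := Set.mem_iUnion₂.1 (hcover hy)
  rw [Metric.mem_ball] at hyc
  exact Set.mem_iUnion₂.2 ⟨c, hc, Metric.mem_ball.2 (by
    have := dist_triangle x y c; linarith)⟩

/-- A set whose elements are all values of a jointly 1-Lipschitz binary operation on
two totally bounded sets is totally bounded. -/
theorem totallyBounded_comb2 {E : Type*} [SeminormedAddCommGroup E] {S T₁ T₂ : Set E}
    (L : E → E → E) (hL : ∀ a b a' b', dist (L a b) (L a' b') ≤ dist a a' + dist b b')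
    (h : ∀ x ∈ S, ∃ y ∈ T₁, ∃ z ∈ T₂, x = L y z)
    (h₁ : TotallyBounded T₁) (h₂ : TotallyBounded T₂) : TotallyBounded S := by
  rw [Metric.totallyBounded_iff]
  intro ε hε
  rw [Metric.totallyBounded_iff] at h₁ h₂
  obtain ⟨t₁, ht₁, hc₁⟩ := h₁ (ε/3) (by linarith)
  obtain ⟨t₂, ht₂, hc₂⟩ := h₂ (ε/3) (by linarith)
  refine ⟨Set.image2 L t₁ t₂, ht₁.image2 _ ht₂, fun x hx => ?_⟩
  obtain ⟨y, hy, z, hz, rfl⟩ := h x hx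
  obtain ⟨a, ha, hya⟩ := Set.mem_iUnion₂.1 (hc₁ hy)
  obtain ⟨b, hb, hzb⟩ := Set.mem_iUnion₂.1 (hc₂ hz)
  rw [Metric.mem_ball] at hya hzb
  refine Set.mem_iUnion₂.2 ⟨L a b, Set.mem_image2_of_mem ha hb, Metric.mem_ball.2 ?_⟩
  have := hL y z a b
  linarith

/-- In a complete metric space, a set has compact closure iff it is totally bounded. -/
theorem isCompact_closure_iff' {E : Type*} [PseudoMetricSpace E] [CompleteSpace E] {S : Set E} :
    IsCompact (closure S) ↔ TotallyBounded S :=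
  ⟨fun h => h.totallyBounded.subset subset_closure,
   fun h => TotallyBounded.isCompact_of_isClosed h.closure isClosed_closure⟩

/-! ### Lemmas about trajectories -/

section torus
variable {d : ℕ} {Φ : ℝ → (Torus d ≃ᵐ Torus d)}

theorem mem2 (hΦ : ∀ t : ℝ, 0 ≤ t → MeasurePreserving (Φ t) (volume : Measure (Torus d)) volume)
    {f : Torus d → ℝ} (hf : MemLp f ⊤ (volume : Measure (Torus d))) {t : ℝ} (ht : 0 ≤ t) :
    MemLp (f ∘ (Φ t).symm) 2 (volume : Measure (Torus d)) :=
  (hf.mono_exponent le_top).comp_measurePreserving ((hΦ t ht).symm _)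

theorem traj_near
    (hΦ : ∀ t : ℝ, 0 ≤ t → MeasurePreserving (Φ t) (volume : Measure (Torus d)) volume)
    {f g : Torus d → ℝ} (hf : MemLp f ⊤ (volume : Measure (Torus d)))
    (hg : MemLp g ⊤ (volume : Measure (Torus d)))
    {x : Lp ℝ 2 (volume : Measure (Torus d))} (hx : x ∈ trajectory Φ f) :
    ∃ y ∈ trajectory Φ g, dist x y ≤ (eLpNorm (f - g) ⊤ (volume : Measure (Torus d))).toReal := by
  obtain ⟨t, ht, hxe⟩ := hx
  refine ⟨(mem2 hΦ hg ht).toLp _, ⟨t, ht, MemLp.coeFn_toLp _⟩, ?_⟩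
  rw [Lp.dist_def]
  have h1 : (⇑x - ⇑((mem2 hΦ hg ht).toLp _)) =ᵐ[(volume : Measure (Torus d))]
      (f - g) ∘ (Φ t).symm := by
    filter_upwards [hxe, MemLp.coeFn_toLp (mem2 hΦ hg ht)] with a h1 h2
    simp [h1, h2, Function.comp]
  rw [eLpNorm_congr_ae h1,
    eLpNorm_comp_measurePreserving (hf.sub hg).aestronglyMeasurable ((hΦ t ht).symm _)]
  have h2 : eLpNorm (f - g) 2 (volume : Measure (Torus d)) ≤
      eLpNorm (f - g) ⊤ (volume : Measure (Torus d)) :=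
    eLpNorm_le_eLpNorm_of_exponent_le le_top (hf.sub hg).aestronglyMeasurable
  exact ENNReal.toReal_mono (hf.sub hg).eLpNorm_ne_top h2

theorem traj_congr
    (hΦ : ∀ t : ℝ, 0 ≤ t → MeasurePreserving (Φ t) (volume : Measure (Torus d)) volume)
    {f g : Torus d → ℝ} (h : f =ᵐ[(volume : Measure (Torus d))] g) :
    trajectory Φ f = trajectory Φ g := by
  ext x
  constructor
  · rintro ⟨t, ht, hx⟩
    exact ⟨t, ht, hx.trans (((hΦ t ht).symm _).quasiMeasurePreserving.ae_eq_comp h)⟩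
  · rintro ⟨t, ht, hx⟩
    exact ⟨t, ht, hx.trans (((hΦ t ht).symm _).quasiMeasurePreserving.ae_eq_comp h.symm)⟩

/-- Functions that are essentially bounded and have totally bounded trajectory. -/
def Good (Φ : ℝ → (Torus d ≃ᵐ Torus d)) (f : Torus d → ℝ) : Prop :=
  MemLp f ⊤ (volume : Measure (Torus d)) ∧ TotallyBounded (trajectory Φ f)

theorem good_zero : Good Φ (0 : Torus d → ℝ) := by
  refine ⟨MemLp.zero, ?_⟩
  have hsub : trajectory Φ (0 : Torus d → ℝ) ⊆ {(0 : Lp ℝ 2 (volume : Measure (Torus d)))} := by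
    rintro x ⟨t, ht, hx⟩
    have hx0 : ⇑x =ᵐ[(volume : Measure (Torus d))] ⇑(0 : Lp ℝ 2 (volume : Measure (Torus d))) := by
      filter_upwards [hx, Lp.coeFn_zero ℝ 2 (volume : Measure (Torus d))] with a h1 h2
      simp [h1, h2, Function.comp]
    simp [Lp.ext hx0]
  exact (Set.finite_singleton _).totallyBounded.subset hsub

variable (hΦ : ∀ t : ℝ, 0 ≤ t → MeasurePreserving (Φ t) (volume : Measure (Torus d)) volume)
include hΦ

theorem good_add {f g : Torus d → ℝ} (hf : Good Φ f) (hg : Good Φ g) : Good Φ (f + g) := by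
  refine ⟨hf.1.add hg.1, ?_⟩
  refine totallyBounded_comb2 (fun a b => a + b) (fun a b a' b' => dist_add_add_le a b a' b')
    ?_ hf.2 hg.2
  rintro x ⟨t, ht, hx⟩
  refine ⟨(mem2 hΦ hf.1 ht).toLp _, ⟨t, ht, MemLp.coeFn_toLp _⟩,
    (mem2 hΦ hg.1 ht).toLp _, ⟨t, ht, MemLp.coeFn_toLp _⟩, ?_⟩
  apply Lp.ext
  filter_upwards [hx, Lp.coeFn_add ((mem2 hΦ hf.1 ht).toLp _) ((mem2 hΦ hg.1 ht).toLp _),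
    MemLp.coeFn_toLp (mem2 hΦ hf.1 ht), MemLp.coeFn_toLp (mem2 hΦ hg.1 ht)] with a h1 h2 h3 h4
  rw [h1, h2, Pi.add_apply, h3, h4]; simp

theorem tb_smul {f : Torus d → ℝ} (hf : MemLp f ⊤ (volume : Measure (Torus d))) (c : ℝ)
    (h : TotallyBounded (trajectory Φ f)) : TotallyBounded (trajectory Φ (c • f)) := by
  have hsub : trajectory Φ (c • f) ⊆ (fun v : Lp ℝ 2 (volume : Measure (Torus d)) => c • v) ''
      trajectory Φ f := by
    rintro x ⟨t, ht, hx⟩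
    refine ⟨(mem2 hΦ hf ht).toLp _, ⟨t, ht, MemLp.coeFn_toLp _⟩, ?_⟩
    apply Lp.ext
    filter_upwards [hx, Lp.coeFn_smul c ((mem2 hΦ hf ht).toLp _),
      MemLp.coeFn_toLp (mem2 hΦ hf ht)] with a h1 h2 h3
    rw [h1, h2, Pi.smul_apply, h3]; simp
  exact (h.image (uniformContinuous_const_smul c)).subset hsub

theorem tb_diff {f g : Torus d → ℝ} (hf : MemLp f ⊤ (volume : Measure (Torus d)))
    (hg : MemLp g ⊤ (volume : Measure (Torus d)))
    (h1 : TotallyBounded (trajectory Φ (f + g))) (h2 : TotallyBounded (trajectory Φ f)) :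
    TotallyBounded (trajectory Φ g) := by
  refine totallyBounded_comb2 (fun a b => a - b) (fun a b a' b' => dist_sub_sub_le a b a' b')
    ?_ h1 h2
  rintro x ⟨t, ht, hx⟩
  refine ⟨(mem2 hΦ (hf.add hg) ht).toLp _, ⟨t, ht, MemLp.coeFn_toLp _⟩,
    (mem2 hΦ hf ht).toLp _, ⟨t, ht, MemLp.coeFn_toLp _⟩, ?_⟩
  apply Lp.ext
  filter_upwards [hx, Lp.coeFn_sub ((mem2 hΦ (hf.add hg) ht).toLp _) ((mem2 hΦ hf ht).toLp _),
    MemLp.coeFn_toLp (mem2 hΦ (hf.add hg) ht), MemLp.coeFn_toLp (mem2 hΦ hf ht)] with a h1 h2 h3 h4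
  rw [h1, h2, Pi.sub_apply, h3, h4]; simp

theorem good_indicator
    (hD : ∀ D : Set (Torus d), MeasurableSet D →
      TotallyBounded (trajectory Φ (D.indicator fun _ => (1:ℝ))))
    {D : Set (Torus d)} (hDm : MeasurableSet D) (c : ℝ) :
    Good Φ (D.indicator fun _ => c) := by
  have heq : (D.indicator fun _ => c) = c • (D.indicator fun _ => (1:ℝ)) := by
    funext x; by_cases h : x ∈ D <;>
      simp [Set.indicator_of_mem, Set.indicator_of_notMem, h]
  refine ⟨memLp_indicator_const ⊤ hDm c (Or.inr (measure_ne_top _ _)), ?_⟩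
  rw [heq]
  exact tb_smul hΦ (memLp_indicator_const ⊤ hDm (1:ℝ) (Or.inr (measure_ne_top _ _))) c (hD D hDm)

/-- If every indicator function has totally bounded trajectory, then so does every
essentially bounded function (quantization argument). -/
theorem tb_of_indicators
    (hD : ∀ D : Set (Torus d), MeasurableSet D →
      TotallyBounded (trajectory Φ (D.indicator fun _ => (1:ℝ))))
    (f : Torus d → ℝ) (hf : MemLp f ⊤ (volume : Measure (Torus d))) (hfm : Measurable f) :
    TotallyBounded (trajectory Φ f) := by
  apply totallyBounded_of_near
  intro ε hε
  have hfin : eLpNormEssSup f (volume : Measure (Torus d)) ≠ ⊤ := by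
    have h2 := hf.2
    rw [eLpNorm_exponent_top] at h2
    exact h2.ne
  set M := (eLpNormEssSup f (volume : Measure (Torus d))).toReal with hMdef
  have hMae : ∀ᵐ x ∂(volume : Measure (Torus d)), |f x| ≤ M := by
    filter_upwards [ae_le_eLpNormEssSup (f := f) (μ := (volume : Measure (Torus d)))] with x hx
    have h3 : ((‖f x‖₊ : ℝ≥0∞)).toReal ≤ M := ENNReal.toReal_mono hfin hx
    simpa [Real.norm_eq_abs] using h3
  set N : ℤ := ⌈M / ε⌉ with hNdef
  set D : ℤ → Set (Torus d) := fun k => {x | ⌊f x / ε⌋ = k} with hDdef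
  have hDm : ∀ k, MeasurableSet (D k) := by
    intro k
    exact ((hfm.div_const ε).floor) (measurableSet_singleton k)
  set F : ℤ → (Torus d → ℝ) := fun k => (D k).indicator (fun _ => (k : ℝ) * ε) with hFdef
  set s : Torus d → ℝ := ∑ k ∈ Finset.Icc (-N) N, F k with hsdef
  have hgood : Good Φ s := by
    refine Finset.sum_induction F (Good Φ) (fun a b ha hb => good_add hΦ ha hb) good_zero ?_
    intro k _
    have hFk : F k = ((k : ℝ) * ε) • ((D k).indicator fun _ => (1:ℝ)) := by
      funext x; by_cases h : x ∈ D k <;>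
        simp [hFdef, Set.indicator_of_mem, Set.indicator_of_notMem, h]
    rw [hFk]
    have hg := good_indicator hΦ hD (hDm k) (1:ℝ)
    exact ⟨hg.1.const_smul _, tb_smul hΦ hg.1 _ hg.2⟩
  have hbound : ∀ᵐ x ∂(volume : Measure (Torus d)), ‖(f - s) x‖ ≤ ε := by
    filter_upwards [hMae] with x hx
    set k₀ : ℤ := ⌊f x / ε⌋ with hk₀
    have hmem : k₀ ∈ Finset.Icc (-N) N := by
      rw [Finset.mem_Icc]
      constructor
      · rw [hk₀, Int.le_floor]
        have hNge : M / ε ≤ (N : ℝ) := Int.le_ceil _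
        have h1 : -M ≤ f x := neg_le_of_abs_le hx
        have h2 : -M / ε ≤ f x / ε := by gcongr
        push_cast
        rw [neg_div] at h2
        linarith
      · rw [hk₀]
        have hle : f x / ε ≤ (N : ℝ) := by
          have h1 : f x ≤ M := le_of_abs_le hx
          have h2 : f x / ε ≤ M / ε := by gcongr
          exact h2.trans (Int.le_ceil _)
        calc ⌊f x / ε⌋ ≤ ⌊(N : ℝ)⌋ := Int.floor_le_floor hle
          _ = N := Int.floor_intCast N
    have hsx : s x = (k₀ : ℝ) * ε := by
      have hsum : s x = ∑ k ∈ Finset.Icc (-N) N, F k x := by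
        rw [hsdef]; simp [Finset.sum_apply]
      rw [hsum, Finset.sum_eq_single_of_mem k₀ hmem ?_]
      · have hxk : x ∈ D k₀ := by simp [hDdef, ← hk₀]
        simp [hFdef, Set.indicator_of_mem hxk]
      · intro k hk hne
        have hxk : x ∉ D k := by
          simp only [hDdef, Set.mem_setOf_eq]
          exact fun h => hne (hk₀.trans h).symm
        simp [hFdef, Set.indicator_of_notMem hxk]
    have hfl : (k₀ : ℝ) ≤ f x / ε := by rw [hk₀]; exact Int.floor_le _
    have hfl2 : f x / ε < (k₀ : ℝ) + 1 := by
      rw [hk₀]; exact_mod_cast Int.lt_floor_add_one (f x / ε)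
    have h1 : (k₀ : ℝ) * ε ≤ f x := by rw [← le_div_iff₀ hε]; exact hfl
    have h2 : f x < ((k₀ : ℝ) + 1) * ε := by rw [← div_lt_iff₀ hε]; exact hfl2
    simp only [Pi.sub_apply, hsx, Real.norm_eq_abs]
    rw [abs_le]
    constructor <;> nlinarith
  have hest : eLpNorm (f - s) ⊤ (volume : Measure (Torus d)) ≤ ENNReal.ofReal ε := by
    rw [eLpNorm_exponent_top]
    exact eLpNormEssSup_le_of_ae_bound hbound
  refine ⟨trajectory Φ s, hgood.2, fun x hx => ?_⟩
  obtain ⟨y, hy, hxy⟩ := traj_near hΦ hf hgood.1 hx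
  refine ⟨y, hy, hxy.trans ?_⟩
  calc (eLpNorm (f - s) ⊤ (volume : Measure (Torus d))).toReal
      ≤ (ENNReal.ofReal ε).toReal := ENNReal.toReal_mono ENNReal.ofReal_ne_top hest
    _ = ε := ENNReal.toReal_ofReal hε.le

theorem tb_of_sum_tb {ρ : Lp ℝ ⊤ (volume : Measure (Torus d))} {χ : Torus d → ℝ}
    (hχ : MemLp χ ⊤ (volume : Measure (Torus d)))
    (h1 : TotallyBounded (trajectory Φ
      ((ρ + hχ.toLp χ : Lp ℝ ⊤ (volume : Measure (Torus d))) : Torus d → ℝ)))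
    (h2 : TotallyBounded (trajectory Φ (ρ : Torus d → ℝ))) :
    TotallyBounded (trajectory Φ χ) := by
  have hae : ((ρ + hχ.toLp χ : Lp ℝ ⊤ (volume : Measure (Torus d))) : Torus d → ℝ)
      =ᵐ[(volume : Measure (Torus d))] (ρ : Torus d → ℝ) + χ := by
    filter_upwards [Lp.coeFn_add ρ (hχ.toLp χ), MemLp.coeFn_toLp hχ] with a ha hb
    rw [ha, Pi.add_apply, hb]; simp
  rw [traj_congr hΦ hae] at h1
  exact tb_diff hΦ (Lp.memLp ρ) hχ h1 h2

end torus

/-- For a family `(Φ t)_{t ≥ 0}` of measure-preserving bijections of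
`𝕋^d`, the set `ℱ ⊆ L^∞(𝕋^d)` of data with non-precompact trajectory is open and dense
in `L^∞(𝕋^d)` if and only if there is a measurable set `D` whose indicator trajectory
`{1_D ∘ Φ_t⁻¹}_{t ≥ 0}` is not precompact in `L²(𝕋^d)`. -/
theorem stmt9 (d : ℕ) (hd : 2 ≤ d)
    (Φ : ℝ → (Torus d ≃ᵐ Torus d))
    (hΦ : ∀ t : ℝ, 0 ≤ t → MeasurePreserving (Φ t) (volume : Measure (Torus d)) volume) :
    (IsOpen (mixedData Φ) ∧ Dense (mixedData Φ)) ↔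
      ∃ D : Set (Torus d), MeasurableSet D ∧
        ¬ IsCompact (closure (trajectory Φ (D.indicator (fun _ => (1 : ℝ))))) := by
  have hiff : ∀ S : Set (Lp ℝ 2 (volume : Measure (Torus d))),
      IsCompact (closure S) ↔ TotallyBounded S := fun S => isCompact_closure_iff'
  constructor
  · rintro ⟨_, hdense⟩
    obtain ⟨ρ, hρ⟩ := hdense.nonempty
    by_contra h
    push_neg at h
    apply hρ
    rw [hiff]
    exact tb_of_indicators hΦ (fun D hDm => (hiff _).1 (h D hDm)) _ (Lp.memLp ρ)
      (Lp.stronglyMeasurable ρ).measurable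
  · rintro ⟨D, hDm, hD⟩
    have hDtb : ¬ TotallyBounded (trajectory Φ (D.indicator fun _ => (1:ℝ))) :=
      fun h => hD ((hiff _).2 h)
    constructor
    · -- openness : the complement is closed
      rw [← isClosed_compl_iff]
      have hcompl : (mixedData Φ)ᶜ =
          {ρ : Lp ℝ ⊤ (volume : Measure (Torus d)) |
            TotallyBounded (trajectory Φ (ρ : Torus d → ℝ))} := by
        ext ρ
        simp only [Set.mem_compl_iff, mixedData, Set.mem_setOf_eq, not_not]
        exact hiff _
      rw [hcompl]
      apply isClosed_of_closure_subset
      intro ρ hρ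
      rw [Metric.mem_closure_iff] at hρ
      apply totallyBounded_of_near
      intro ε hε
      obtain ⟨σ, hσ, hdist⟩ := hρ ε hε
      refine ⟨trajectory Φ (σ : Torus d → ℝ), hσ, fun x hx => ?_⟩
      obtain ⟨y, hy, hxy⟩ := traj_near hΦ (Lp.memLp ρ) (Lp.memLp σ) hx
      refine ⟨y, hy, hxy.trans ?_⟩
      rw [← Lp.dist_def]
      exact hdist.le
    · -- density
      rw [Metric.dense_iff]
      intro ρ r hr
      by_cases hρ : ρ ∈ mixedData Φ
      · exact ⟨ρ, Metric.mem_ball_self hr, hρ⟩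
      have hρtb : TotallyBounded (trajectory Φ (ρ : Torus d → ℝ)) := by
        simp only [mixedData, Set.mem_setOf_eq, not_not] at hρ
        exact (hiff _).1 hρ
      have hcpos : 0 < r / 2 := by positivity
      have hχ : MemLp (D.indicator fun _ => r / 2) ⊤ (volume : Measure (Torus d)) :=
        memLp_indicator_const ⊤ hDm (r / 2) (Or.inr (measure_ne_top _ _))
      refine ⟨ρ + hχ.toLp _, ?_, ?_⟩
      · -- in the ball
        rw [Metric.mem_ball, dist_comm, dist_eq_norm]
        have hsub : ρ + hχ.toLp _ - ρ = hχ.toLp _ := by abel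
        rw [← neg_sub, norm_neg, hsub]
        calc ‖hχ.toLp _‖ = (eLpNorm (D.indicator fun _ => r / 2) ⊤
              (volume : Measure (Torus d))).toReal := Lp.norm_toLp _ _
          _ ≤ ((‖r / 2‖₊ : ℝ≥0∞)).toReal := by
              apply ENNReal.toReal_mono ENNReal.coe_ne_top
              rw [eLpNorm_exponent_top]
              exact eLpNormEssSup_indicator_const_le D (r / 2)
          _ = |r / 2| := by simp [Real.norm_eq_abs, abs_div]
          _ < r := by rw [abs_of_pos hcpos]; linarith
      · -- in mixedData
        intro hcl
        have hσtb : TotallyBounded (trajectory Φ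
            ((ρ + hχ.toLp _ : Lp ℝ ⊤ (volume : Measure (Torus d))) : Torus d → ℝ)) :=
          (hiff _).1 hcl
        have hχtb : TotallyBounded (trajectory Φ (D.indicator fun _ => r / 2)) :=
          tb_of_sum_tb hΦ hχ hσtb hρtb
        have htb2 := tb_smul hΦ hχ (r / 2)⁻¹ hχtb
        have heq : (r / 2)⁻¹ • (D.indicator fun _ => r / 2) =
            D.indicator (fun _ => (1:ℝ)) := by
          funext x; by_cases h : x ∈ D <;>
            simp [Set.indicator_of_mem, Set.indicator_of_notMem, h,
              inv_mul_cancel₀ hcpos.ne', div_self (ne_of_gt hr)]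
        rw [heq] at htb2
        exact hDtb htb2
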